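/- Let n ≥ 1 and let J, L ⊆ {0, …, n-1}. There exist an integer j and a finite set I ⊆ ℤ with J = ∂ₙ(I) Δ (L - j) if and only if L - j ≡ J (mod n) for some integer j, i.e., if and only if (J, n) and (L, n) have the same necklace type. -/

import Mathlib

/-!
Let `ρ(A)(r) = residueParity n A r ∈ ZMod 2` be the parity of the number of elements of `A`
congruent to `r` mod `n`. It is additive under symmetric difference and vanishes on every
`∂ₙ(I)`, because `I - n` has the same residues as `I`. Conversely a set with `ρ = 0` is a
boundary: any element `a` has a partner `b ≡ a` in the set, and the pair can be removed at
once since `{a} Δ {a + kn}` telescopes into a symmetric difference of boundaries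
`∂ₙ{m} = {m} Δ {m - n}`. So `J = ∂ₙ(I) Δ S` is solvable iff `ρ(J) = ρ(S)`, and for sets
meeting each residue class at most once, `ρ` is the indicator of the image in `ZMod n`.
-/

/-- The boundary operator `∂ₙ I = I Δ (I - n)` on finite subsets of `ℤ`. -/
def intBd (n : ℤ) (I : Finset ℤ) : Finset ℤ := symmDiff I (I.image (· - n))

open Finset
open scoped symmDiff

theorem Finset.sum_symmDiff_add_two_nsmul_sum_inter {α M : Type*} [DecidableEq α]
    [AddCommMonoid M] (s t : Finset α) (f : α → M) :
    ∑ x ∈ s ∆ t, f x + 2 • ∑ x ∈ s ∩ t, f x = ∑ x ∈ s, f x + ∑ x ∈ t, f x := by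
  rw [← sum_union_inter, ← sum_sdiff (inter_subset_union (s := s) (t := t)),
    symmDiff_eq_sup_sdiff_inf, two_nsmul, add_assoc]
  rfl

lemma intBd_symmDiff (n : ℤ) (A B : Finset ℤ) :
    intBd n (A ∆ B) = intBd n A ∆ intBd n B := by
  rw [intBd, intBd, intBd, image_symmDiff _ _ sub_left_injective,
    symmDiff_symmDiff_symmDiff_comm]

lemma intBd_singleton (n m : ℤ) : intBd n {m} = {m} ∆ {m - n} := by
  simp [intBd]

lemma symmDiff_mem_range_intBd {n : ℤ} {A B : Finset ℤ} (hA : A ∈ Set.range (intBd n))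
    (hB : B ∈ Set.range (intBd n)) : A ∆ B ∈ Set.range (intBd n) := by
  obtain ⟨I, rfl⟩ := hA
  obtain ⟨K, rfl⟩ := hB
  exact ⟨I ∆ K, intBd_symmDiff n I K⟩

lemma symmDiff_mem_range_intBd_iff {n : ℤ} {A B : Finset ℤ} (hB : B ∈ Set.range (intBd n)) :
    A ∆ B ∈ Set.range (intBd n) ↔ A ∈ Set.range (intBd n) :=
  ⟨fun h => symmDiff_symmDiff_cancel_right B A ▸ symmDiff_mem_range_intBd h hB,
    fun h => symmDiff_mem_range_intBd h hB⟩

lemma singleton_symmDiff_singleton_sub_mem_range_intBd_iff (n a m : ℤ) :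
    {a} ∆ {m - n} ∈ Set.range (intBd n) ↔ {a} ∆ {m} ∈ Set.range (intBd n) := by
  rw [← symmDiff_mem_range_intBd_iff ⟨{m}, intBd_singleton n m⟩, symmDiff_comm ({m} : Finset ℤ),
    symmDiff_assoc, symmDiff_symmDiff_cancel_left]

lemma singleton_symmDiff_singleton_mem_range_intBd {n a b : ℤ} (h : n ∣ b - a) :
    {a} ∆ {b} ∈ Set.range (intBd n) := by
  obtain ⟨c, hc⟩ := h
  obtain rfl : b = a + n * c := by linarith
  clear hc
  induction c using Int.induction_on with
  | zero => exact ⟨∅, by simp [intBd]⟩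
  | succ c ih =>
    rwa [← singleton_symmDiff_singleton_sub_mem_range_intBd_iff n,
      show a + n * (c + 1) - n = a + n * c by ring]
  | pred c ih =>
    rwa [show a + n * (-c - 1) = a + n * -c - n by ring,
      singleton_symmDiff_singleton_sub_mem_range_intBd_iff]

def residueParity (n : ℕ) (A : Finset ℤ) (r : ZMod n) : ZMod 2 :=
  ∑ a ∈ A, if (a : ZMod n) = r then 1 else 0

lemma residueParity_symmDiff (n : ℕ) (A B : Finset ℤ) :
    residueParity n (A ∆ B) = residueParity n A + residueParity n B := by
  funext r
  rw [Pi.add_apply, residueParity, residueParity, residueParity,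
    ← sum_symmDiff_add_two_nsmul_sum_inter, two_nsmul, CharTwo.add_self_eq_zero, add_zero]

lemma residueParity_intBd (n : ℕ) (I : Finset ℤ) : residueParity n (intBd n I) = 0 := by
  have hshift : residueParity n (I.image (· - n)) = residueParity n I := by
    funext r
    rw [residueParity, residueParity, sum_image sub_left_injective.injOn]
    simp only [Int.cast_sub, Int.cast_natCast, ZMod.natCast_self, sub_zero]
  funext r
  rw [intBd, residueParity_symmDiff, hshift, Pi.add_apply, CharTwo.add_self_eq_zero, Pi.zero_apply]

lemma residueParity_apply_of_injOn {n : ℕ} {A : Finset ℤ} (hA : Set.InjOn ((↑) : ℤ → ZMod n) A)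
    (r : ZMod n) : residueParity n A r = if r ∈ A.image ((↑) : ℤ → ZMod n) then 1 else 0 := by
  rw [residueParity, ← sum_image (f := fun x : ZMod n => if x = r then (1 : ZMod 2) else 0) hA,
    sum_ite_eq']

lemma residueParity_eq_iff_image_eq {n : ℕ} {A B : Finset ℤ}
    (hA : Set.InjOn ((↑) : ℤ → ZMod n) A) (hB : Set.InjOn ((↑) : ℤ → ZMod n) B) :
    residueParity n A = residueParity n B ↔
      A.image ((↑) : ℤ → ZMod n) = B.image ((↑) : ℤ → ZMod n) := by
  refine ⟨fun h => ext fun r => ?_, fun h => funext fun r => ?_⟩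
  · have := congrFun h r
    rw [residueParity_apply_of_injOn hA, residueParity_apply_of_injOn hB] at this
    by_cases hrA : r ∈ A.image ((↑) : ℤ → ZMod n) <;>
      by_cases hrB : r ∈ B.image ((↑) : ℤ → ZMod n) <;> simp [hrA, hrB] at this ⊢
  · rw [residueParity_apply_of_injOn hA, residueParity_apply_of_injOn hB, h]

lemma exists_ne_intCast_eq_of_residueParity_eq_zero {n : ℕ} {A : Finset ℤ}
    (h : residueParity n A = 0) {a : ℤ} (ha : a ∈ A) :
    ∃ b ∈ A, b ≠ a ∧ (b : ZMod n) = a := by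
  set F := A.filter fun b : ℤ => (b : ZMod n) = a
  have hF : (#F : ZMod 2) = 0 := by
    simpa [residueParity, sum_boole] using congrFun h (a : ZMod n)
  have haF : a ∈ F := mem_filter.mpr ⟨ha, rfl⟩
  have hF1 : 1 < #F := by
    have := card_pos.mpr ⟨a, haF⟩
    have : #F ≠ 1 := fun h1 => by rw [h1] at hF; exact one_ne_zero hF
    omega
  obtain ⟨b, hbF, hba⟩ := exists_mem_ne hF1 a
  exact ⟨b, (mem_filter.mp hbF).1, hba, (mem_filter.mp hbF).2⟩

lemma mem_range_intBd_iff_residueParity_eq_zero {n : ℕ} {A : Finset ℤ} :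
    A ∈ Set.range (intBd n) ↔ residueParity n A = 0 := by
  refine ⟨fun ⟨I, hI⟩ => hI ▸ residueParity_intBd n I, fun h => ?_⟩
  induction A using Finset.strongInduction with
  | H A ih =>
    rcases A.eq_empty_or_nonempty with rfl | ⟨a, ha⟩
    · exact ⟨∅, by simp [intBd]⟩
    obtain ⟨b, hb, hba, hab⟩ := exists_ne_intCast_eq_of_residueParity_eq_zero h ha
    set P : Finset ℤ := {a} ∆ {b}
    have hPA : P ⊆ A :=
      symmDiff_subset_union.trans (union_subset (singleton_subset_iff.mpr ha)
        (singleton_subset_iff.mpr hb))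
    have hP : residueParity n P = 0 := by
      funext r
      simp only [P, residueParity_symmDiff, Pi.add_apply]
      simp only [residueParity, sum_singleton, hab, CharTwo.add_self_eq_zero, Pi.zero_apply]
    have hPbd : P ∈ Set.range (intBd n) := singleton_symmDiff_singleton_mem_range_intBd
      ((ZMod.intCast_eq_intCast_iff_dvd_sub a b n).mp hab.symm)
    rw [← symmDiff_mem_range_intBd_iff hPbd]
    refine ih _ ?_ (by rw [residueParity_symmDiff, h, hP, add_zero])
    rw [symmDiff_of_ge hPA]
    exact sdiff_ssubset hPA ⟨a, by simp [P, mem_symmDiff, hba.symm]⟩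

lemma symmDiff_mem_range_intBd_iff_residueParity_eq {n : ℕ} {A B : Finset ℤ} :
    A ∆ B ∈ Set.range (intBd n) ↔ residueParity n A = residueParity n B := by
  simp only [mem_range_intBd_iff_residueParity_eq_zero, residueParity_symmDiff, funext_iff,
    CharTwo.add_eq_zero]

lemma injOn_intCast_of_subset_Ico {n : ℕ} {a : ℤ} {A : Finset ℤ} (hA : A ⊆ Ico a (a + n)) :
    Set.InjOn ((↑) : ℤ → ZMod n) A := by
  intro x hx y hy hxy
  have hx' := mem_Ico.mp (hA hx)
  have hy' := mem_Ico.mp (hA hy)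
  have := Int.eq_zero_of_abs_lt_dvd ((ZMod.intCast_eq_intCast_iff_dvd_sub x y n).mp hxy)
    (abs_lt.mpr ⟨by omega, by omega⟩)
  omega

theorem stmt_5_general (n : ℕ) (J L : Finset ℤ)
    (hJ : J ⊆ Finset.Ico (0 : ℤ) (n : ℤ)) (hL : L ⊆ Finset.Ico (0 : ℤ) (n : ℤ)) :
    (∃ (j : ℤ) (I : Finset ℤ), J = symmDiff (intBd (n : ℤ) I) (L.image (· - j)))
      ↔
    (∃ j : ℤ, (L.image (· - j)).image (fun m : ℤ => (m : ZMod n))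
        = J.image (fun m : ℤ => (m : ZMod n))) := by
  refine exists_congr fun j => ?_
  have hJinj := injOn_intCast_of_subset_Ico (a := 0) (by simpa using hJ)
  have hSinj : Set.InjOn ((↑) : ℤ → ZMod n) (L.image (· - j)) :=
    injOn_intCast_of_subset_Ico (a := -j) fun x hx => by
      obtain ⟨l, hl, rfl⟩ := mem_image.mp hx
      have := mem_Ico.mp (hL hl)
      exact mem_Ico.mpr ⟨by omega, by omega⟩
  calc (∃ I, J = intBd n I ∆ L.image (· - j))
      ↔ J ∆ L.image (· - j) ∈ Set.range (intBd n) := by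
        refine exists_congr fun I => ⟨fun h => ?_, fun h => ?_⟩ <;>
          rw [h, symmDiff_symmDiff_cancel_right]
    _ ↔ residueParity n J = residueParity n (L.image (· - j)) :=
        symmDiff_mem_range_intBd_iff_residueParity_eq
    _ ↔ _ := (residueParity_eq_iff_image_eq hJinj hSinj).trans eq_comm

theorem stmt_5 (n : ℕ) (hn : 1 ≤ n) (J L : Finset ℤ)
    (hJ : J ⊆ Finset.Ico (0 : ℤ) (n : ℤ)) (hL : L ⊆ Finset.Ico (0 : ℤ) (n : ℤ)) :
    (∃ (j : ℤ) (I : Finset ℤ), J = symmDiff (intBd (n : ℤ) I) (L.image (· - j)))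
      ↔
    (∃ j : ℤ, (L.image (· - j)).image (fun m : ℤ => (m : ZMod n))
        = J.image (fun m : ℤ => (m : ZMod n))) :=
  stmt_5_general n J L hJ hL
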